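/- arXiv:2503.11847 — 3 statements merged into one kernel-verified Lean document; each statement's English description precedes it below -/
import Mathlib

section
/- For t > 0, with γ = √(1+4t²), the angle β(t) = arccos((√t·γ + √(2π)) / √(γ((t+2π)γ + 2√(2πt)))) equals arctan(2t / (1 + √(t/(2π))·γ)). -/
/-!
With `a = √t·γ + √(2π)` and `b = 2t·√(2π)`, the radicand under the square root is exactly
`a² + b²` (because `γ² - 1 = 4t²`), so the cosine is `a / √(a² + b²)` and the angle is
`arctan (b / a)`; dividing numerator and denominator of `b / a` by `√(2π)` gives the claim.
-/

open Real

theorem arccos_div_sqrt_sq_add_sq {a b : ℝ} (ha : 0 < a) (hb : 0 ≤ b) :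
    arccos (a / √(a ^ 2 + b ^ 2)) = arctan (b / a) := by
  have hr : 0 < √(a ^ 2 + b ^ 2) := by positivity
  have hsin : √(1 - (a / √(a ^ 2 + b ^ 2)) ^ 2) = b / √(a ^ 2 + b ^ 2) := by
    rw [← sqrt_sq (by positivity : 0 ≤ b / √(a ^ 2 + b ^ 2))]
    congr 1
    field_simp
    rw [sq_sqrt (by positivity)]
    ring
  rw [arccos_eq_arctan (by positivity), hsin, div_div_div_cancel_right₀ hr.ne']

section

variable {t c γ : ℝ}

theorem sqrt_one_add_four_sq_mul_eq_sq_add_sq (ht : 0 ≤ t) (hc : 0 ≤ c) :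
    √(1 + 4 * t ^ 2) * ((t + c) * √(1 + 4 * t ^ 2) + 2 * √(c * t)) =
      (√t * √(1 + 4 * t ^ 2) + √c) ^ 2 + (2 * t * √c) ^ 2 := by
  have hγ : √(1 + 4 * t ^ 2) ^ 2 = 1 + 4 * t ^ 2 := sq_sqrt (by positivity)
  rw [sqrt_mul hc]
  linear_combination c * hγ - √(1 + 4 * t ^ 2) ^ 2 * sq_sqrt ht - (1 + 4 * t ^ 2) * sq_sqrt hc

theorem div_one_add_sqrt_div_mul_eq (hc : 0 < c) :
    2 * t / (1 + √(t / c) * γ) = 2 * t * √c / (√t * γ + √c) := by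
  have hsc : √c ≠ 0 := (sqrt_pos.mpr hc).ne'
  have hden : √t * γ + √c = (1 + √(t / c) * γ) * √c := by
    rw [sqrt_div' _ hc.le]
    field_simp
    ring
  rw [hden, mul_div_mul_right _ _ hsc]

end

/-- For `t > 0`, with `γ = √(1+4t²)`, the angle
`β(t) = arccos((√t·γ + √(2π)) / √(γ((t+2π)γ + 2√(2πt))))`
equals `arctan(2t / (1 + √(t/(2π))·γ))`. -/
theorem arccos_eq_arctan_beta (t : ℝ) (ht : 0 < t) :
    Real.arccos ((Real.sqrt t * Real.sqrt (1 + 4 * t ^ 2) + Real.sqrt (2 * π)) /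
        Real.sqrt (Real.sqrt (1 + 4 * t ^ 2) *
          ((t + 2 * π) * Real.sqrt (1 + 4 * t ^ 2) + 2 * Real.sqrt (2 * π * t)))) =
      Real.arctan (2 * t / (1 + Real.sqrt (t / (2 * π)) * Real.sqrt (1 + 4 * t ^ 2))) := by
  have h2π : 0 < 2 * π := by positivity
  rw [sqrt_one_add_four_sq_mul_eq_sq_add_sq ht.le h2π.le,
    div_one_add_sqrt_div_mul_eq h2π]
  exact arccos_div_sqrt_sq_add_sq (by positivity) (by positivity)
end

section
/- For t ≥ 2π, the norm of the front track of the polar square root spiral satisfies ‖F₀(t)‖ = √(1 + t/(2π) + (1/γ)·√(2t/π)), where γ = √(1+4t²). -/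
open Real

/-- The polar square root spiral `F₁(t) = √(t/(2π))(cos t, sin t)`. -/
noncomputable def F1 (t : ℝ) : EuclideanSpace ℝ (Fin 2) :=
  WithLp.toLp 2 ![Real.sqrt (t / (2 * π)) * Real.cos t, Real.sqrt (t / (2 * π)) * Real.sin t]

/-- The front track `F₀(t) = F₁(t) + F₁'(t)/‖F₁'(t)‖`. -/
noncomputable def F0 (t : ℝ) : EuclideanSpace ℝ (Fin 2) :=
  F1 t + ‖deriv F1 t‖⁻¹ • deriv F1 t

/-- For `t ≥ 2π`, `‖F₀(t)‖ = √(1 + t/(2π) + (1/γ)·√(2t/π))` with `γ = √(1+4t²)`. -/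
theorem norm_front_track (t : ℝ) (ht : 2 * π ≤ t) :
    ‖F0 t‖ =
      Real.sqrt (1 + t / (2 * π) + (1 / Real.sqrt (1 + 4 * t ^ 2)) * Real.sqrt (2 * t / π)) := by
  have hπ := Real.pi_pos
  have ht0 : 0 < t := lt_of_lt_of_le (by positivity) ht
  have hx : (0:ℝ) < t / (2 * π) := by positivity
  set s : ℝ := Real.sqrt (t / (2 * π)) with hs
  have hs0 : 0 < s := Real.sqrt_pos.2 hx
  have hs2 : s ^ 2 = t / (2 * π) := Real.sq_sqrt hx.le
  set s' : ℝ := 1 / (2 * s) * (1 / (2 * π)) with hs'def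
  have hds : HasDerivAt (fun u : ℝ => Real.sqrt (u / (2 * π))) s' t := by
    have h1 : HasDerivAt (fun u : ℝ => u / (2 * π)) (1 / (2 * π)) t := by
      simpa using (hasDerivAt_id t).div_const (2 * π)
    have := (Real.hasDerivAt_sqrt hx.ne').comp t h1
    exact this
  set D : EuclideanSpace ℝ (Fin 2) :=
    WithLp.toLp 2 ![s' * Real.cos t - s * Real.sin t, s' * Real.sin t + s * Real.cos t] with hDdef
  have hD : HasDerivAt F1 D t := by
    have hpi : HasDerivAt
        (fun u : ℝ => (![Real.sqrt (u / (2 * π)) * Real.cos u,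
          Real.sqrt (u / (2 * π)) * Real.sin u] : Fin 2 → ℝ))
        (![s' * Real.cos t - s * Real.sin t, s' * Real.sin t + s * Real.cos t]) t := by
      refine hasDerivAt_pi.2 (Fin.forall_fin_two.2 ⟨?_, ?_⟩)
      · simp only [Matrix.cons_val_zero]
        exact (hds.mul (Real.hasDerivAt_cos t)).congr_deriv (by rw [← hs]; ring)
      · simp only [Matrix.cons_val_one, Matrix.head_cons, Matrix.cons_val_zero]
        exact (hds.mul (Real.hasDerivAt_sin t)).congr_deriv (by rw [← hs])
    exact ((EuclideanSpace.equiv (Fin 2) ℝ).symm.toContinuousLinearMap.hasFDerivAt.comp_hasDerivAt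
      t hpi)
  have hderiv : deriv F1 t = D := hD.deriv
  have hcs : Real.cos t ^ 2 + Real.sin t ^ 2 = 1 := Real.cos_sq_add_sin_sq t
  have hs'2 : s' ^ 2 = 1 / (8 * π * t) := by
    have h : s' ^ 2 = 1 / (16 * π ^ 2 * s ^ 2) := by
      rw [hs'def]; field_simp; ring
    rw [h, hs2, div_eq_div_iff (by positivity) (by positivity)]
    field_simp
    ring
  have hss' : 2 * s * s' = 1 / (2 * π) := by
    rw [hs'def]; field_simp
  have hDsum : (s' * Real.cos t - s * Real.sin t) ^ 2
      + (s' * Real.sin t + s * Real.cos t) ^ 2 = (1 + 4 * t ^ 2) / (8 * π * t) := by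
    have h : (s' * Real.cos t - s * Real.sin t) ^ 2
        + (s' * Real.sin t + s * Real.cos t) ^ 2 = s' ^ 2 + s ^ 2 := by
      linear_combination (s' ^ 2 + s ^ 2) * hcs
    rw [h, hs'2, hs2]
    field_simp
    ring
  have hnD : ‖D‖ = Real.sqrt ((1 + 4 * t ^ 2) / (8 * π * t)) := by
    rw [EuclideanSpace.norm_eq]
    congr 1
    simp only [hDdef, PiLp.toLp_apply, Fin.sum_univ_two, Matrix.cons_val_zero, Matrix.cons_val_one,
      Matrix.head_cons, Real.norm_eq_abs, sq_abs]
    exact hDsum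
  have hnD0 : 0 < ‖D‖ := by rw [hnD]; positivity
  have hγ : (0:ℝ) < Real.sqrt (1 + 4 * t ^ 2) := by positivity
  have hkey : ‖D‖⁻¹ / (2 * π) = (1 / Real.sqrt (1 + 4 * t ^ 2)) * Real.sqrt (2 * t / π) := by
    have h1 : Real.sqrt (8 * π * t) = 2 * π * Real.sqrt (2 * t / π) := by
      rw [show 8 * π * t = (2 * π) ^ 2 * (2 * t / π) by field_simp; ring,
        Real.sqrt_mul (by positivity), Real.sqrt_sq (by positivity)]
    rw [hnD, ← Real.sqrt_inv, inv_div, Real.sqrt_div (by positivity : (0:ℝ) ≤ 8 * π * t), h1]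
    rw [div_div]
    field_simp
  have hF0 : F0 t = F1 t + ‖D‖⁻¹ • D := by rw [F0, hderiv]
  set c : ℝ := ‖D‖⁻¹ with hc
  have hc2 : c ^ 2 * (s' ^ 2 + s ^ 2) = 1 := by
    have hD2 : ‖D‖ ^ 2 = s' ^ 2 + s ^ 2 := by
      rw [hnD, Real.sq_sqrt (by positivity), hs'2, hs2]
      field_simp; ring
    rw [hc, ← hD2]
    field_simp
  rw [hF0, EuclideanSpace.norm_eq]
  congr 1
  simp only [F1, hDdef, PiLp.toLp_apply, Fin.sum_univ_two, PiLp.add_apply, PiLp.smul_apply, smul_eq_mul,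
    Matrix.cons_val_zero, Matrix.cons_val_one, Matrix.head_cons, Real.norm_eq_abs, sq_abs]
  rw [← hs, ← hkey, ← hs2]
  linear_combination (s ^ 2 + c ^ 2 * (s' ^ 2 + s ^ 2) + 2 * c * s * s') * hcs + hc2 + c * hss'
end

section
/- The unibike error of the polar square root spiral at parameter t is at most √(π/8)·t^(-1/2) for all t ≥ 2π. -/
open Real

/-- The unibike error: the infimum over `s ≥ 2π` of `‖F₀(t) − F₁(s)‖`. -/
noncomputable def E1 (t : ℝ) : ℝ :=
  sInf {d : ℝ | ∃ s : ℝ, 2 * π ≤ s ∧ d = ‖F0 t - F1 s‖}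

set_option maxHeartbeats 1000000 in
lemma hasDerivAt_F1 {t : ℝ} (ht : 0 < t) :
    HasDerivAt F1 (WithLp.toLp 2 ![(4 * π * Real.sqrt (t / (2 * π)))⁻¹ * Real.cos t
        - Real.sqrt (t / (2 * π)) * Real.sin t,
      (4 * π * Real.sqrt (t / (2 * π)))⁻¹ * Real.sin t
        + Real.sqrt (t / (2 * π)) * Real.cos t] : EuclideanSpace ℝ (Fin 2)) t := by
  have hπ := Real.pi_pos
  have hpos : (0:ℝ) < t / (2 * π) := by positivity
  have hsqpos : 0 < Real.sqrt (t / (2 * π)) := Real.sqrt_pos.2 hpos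
  have h1 : HasDerivAt (fun u : ℝ => u / (2 * π)) (1 / (2 * π)) t := by
    simpa using (hasDerivAt_id t).div_const (2 * π)
  have hsq : HasDerivAt (fun u : ℝ => Real.sqrt (u / (2 * π)))
      ((4 * π * Real.sqrt (t / (2 * π)))⁻¹) t := by
    have h2 := (Real.hasDerivAt_sqrt hpos.ne').comp t h1
    exact h2.congr_deriv (by ring)
  have hf : HasDerivAt (fun u : ℝ => Real.sqrt (u / (2 * π)) * Real.cos u)
      ((4 * π * Real.sqrt (t / (2 * π)))⁻¹ * Real.cos t
        - Real.sqrt (t / (2 * π)) * Real.sin t) t := by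
    exact (hsq.mul (Real.hasDerivAt_cos t)).congr_deriv (by ring)
  have hg : HasDerivAt (fun u : ℝ => Real.sqrt (u / (2 * π)) * Real.sin u)
      ((4 * π * Real.sqrt (t / (2 * π)))⁻¹ * Real.sin t
        + Real.sqrt (t / (2 * π)) * Real.cos t) t := by
    exact (hsq.mul (Real.hasDerivAt_sin t)).congr_deriv (by ring)
  have hG : HasDerivAt (fun u : ℝ => (![Real.sqrt (u / (2 * π)) * Real.cos u,
        Real.sqrt (u / (2 * π)) * Real.sin u] : Fin 2 → ℝ))
      ![(4 * π * Real.sqrt (t / (2 * π)))⁻¹ * Real.cos t - Real.sqrt (t / (2 * π)) * Real.sin t,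
        (4 * π * Real.sqrt (t / (2 * π)))⁻¹ * Real.sin t + Real.sqrt (t / (2 * π)) * Real.cos t]
      t := by
    rw [hasDerivAt_pi]
    intro i
    fin_cases i
    · simpa using hf
    · simpa using hg
  exact ((PiLp.continuousLinearEquiv 2 ℝ (fun _ : Fin 2 => ℝ)).symm.hasFDerivAt).comp_hasDerivAt
    t hG

set_option maxHeartbeats 1000000 in
/-- The unibike error of the polar square root spiral is at most `√(π/8)·t^(-1/2)`
for all `t ≥ 2π`. -/
theorem unibike_error_simple_bound (t : ℝ) (ht : 2 * π ≤ t) :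
    E1 t ≤ Real.sqrt (π / 8) * t ^ (-(1 : ℝ) / 2) := by
  have hπ := Real.pi_pos
  have ht0 : 0 < t := lt_of_lt_of_le (by positivity) ht
  set r : ℝ := Real.sqrt (t / (2 * π)) with hr_def
  have hr0 : 0 < r := Real.sqrt_pos.2 (by positivity)
  have hr2 : r ^ 2 = t / (2 * π) := Real.sq_sqrt (by positivity)
  have hr1 : 1 ≤ r := by
    rw [show (1:ℝ) = Real.sqrt 1 by simp, hr_def]
    exact Real.sqrt_le_sqrt (by rw [le_div_iff₀ (by positivity)]; linarith)
  set rp : ℝ := (4 * π * r)⁻¹ with hrp_def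
  have hrp0 : 0 < rp := by positivity
  set ρ : ℝ := Real.sqrt (rp ^ 2 + r ^ 2) with hρ_def
  have hρ2 : ρ ^ 2 = rp ^ 2 + r ^ 2 := Real.sq_sqrt (by positivity)
  have hρ0 : 0 < ρ := Real.sqrt_pos.2 (by positivity)
  have hρr : r ≤ ρ := by
    rw [show r = Real.sqrt (r ^ 2) by rw [Real.sqrt_sq hr0.le], hρ_def]
    exact Real.sqrt_le_sqrt (by linarith [sq_nonneg rp])
  have hD := hasDerivAt_F1 ht0
  have hder : deriv F1 t = WithLp.toLp 2 ![rp * Real.cos t - r * Real.sin t,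
      rp * Real.sin t + r * Real.cos t] := by
    simpa [hrp_def, hr_def] using hD.deriv
  have hnorm : ‖deriv F1 t‖ = ρ := by
    rw [hder, EuclideanSpace.norm_eq, Fin.sum_univ_two]
    simp only [Matrix.cons_val_zero, Matrix.cons_val_one, Matrix.head_cons, Real.norm_eq_abs,
      sq_abs]
    rw [hρ_def]
    congr 1
    linear_combination (rp ^ 2 + r ^ 2) * (Real.sin_sq_add_cos_sq t)
  set a : ℝ := r + rp / ρ with ha_def
  set b : ℝ := r / ρ with hb_def
  have ha0 : 0 < a := by positivity
  have hb0 : 0 < b := by positivity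
  set x : ℝ := a * Real.cos t - b * Real.sin t with hx_def
  set y : ℝ := a * Real.sin t + b * Real.cos t with hy_def
  have hF0 : F0 t = WithLp.toLp 2 ![x, y] := by
    ext i
    fin_cases i
    · show (F1 t + ‖deriv F1 t‖⁻¹ • deriv F1 t) 0 = x
      rw [PiLp.add_apply, PiLp.smul_apply, hnorm, hder]
      show r * Real.cos t + ρ⁻¹ * (rp * Real.cos t - r * Real.sin t) = x
      rw [hx_def, ha_def, hb_def]; field_simp; ring
    · show (F1 t + ‖deriv F1 t‖⁻¹ • deriv F1 t) 1 = y
      rw [PiLp.add_apply, PiLp.smul_apply, hnorm, hder]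
      show r * Real.sin t + ρ⁻¹ * (rp * Real.sin t + r * Real.cos t) = y
      rw [hy_def, ha_def, hb_def]; field_simp; ring
  set A : ℝ := Real.sqrt (a ^ 2 + b ^ 2) with hA_def
  have hA0 : 0 < A := Real.sqrt_pos.2 (by positivity)
  have hA2 : A ^ 2 = a ^ 2 + b ^ 2 := Real.sq_sqrt (by positivity)
  set φ : ℝ := Real.arctan (b / a) with hφ_def
  have hφ0 : 0 ≤ φ := by
    rw [hφ_def, ← Real.arctan_zero]
    exact Real.arctan_strictMono.monotone (by positivity)
  have hφub : φ ≤ 1 / ρ := by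
    have h1 : φ ≤ b / a := by
      calc φ ≤ Real.tan φ := Real.le_tan hφ0 (Real.arctan_lt_pi_div_two _)
        _ = b / a := Real.tan_arctan _
    refine h1.trans ?_
    rw [hb_def, ha_def, div_le_div_iff₀ (by positivity) (by positivity)]
    have h2 : 0 < rp / ρ := by positivity
    have h3 : r / ρ * ρ = r := div_mul_cancel₀ _ hρ0.ne'
    linarith
  set s : ℝ := t + φ + 2 * π with hs_def
  have hs2π : 2 * π ≤ s := by rw [hs_def]; linarith
  have hs0 : 0 < s := lt_of_lt_of_le (by positivity) hs2π
  have hsqrt1 : Real.sqrt (1 + (b / a) ^ 2) = A / a := by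
    rw [show 1 + (b / a) ^ 2 = (a ^ 2 + b ^ 2) / a ^ 2 by field_simp,
      Real.sqrt_div (by positivity), Real.sqrt_sq ha0.le, hA_def]
  have hcosφ : Real.cos φ = a / A := by
    rw [hφ_def, Real.cos_arctan, hsqrt1]
    field_simp
  have hsinφ : Real.sin φ = b / A := by
    rw [hφ_def, Real.sin_arctan, hsqrt1]
    field_simp
  have hcoss : Real.cos s = x / A := by
    rw [hs_def, Real.cos_add_two_pi, Real.cos_add, hcosφ, hsinφ, hx_def]
    field_simp
  have hsins : Real.sin s = y / A := by
    rw [hs_def, Real.sin_add_two_pi, Real.sin_add, hcosφ, hsinφ, hy_def]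
    field_simp
  set B : ℝ := Real.sqrt (s / (2 * π)) with hB_def
  have hB0 : 0 < B := Real.sqrt_pos.2 (by positivity)
  have hB2 : B ^ 2 = s / (2 * π) := Real.sq_sqrt (by positivity)
  have hF1s : F1 s = WithLp.toLp 2 ![B * (x / A), B * (y / A)] := by
    simp only [F1]
    rw [hcoss, hsins]
  have hxy : x ^ 2 + y ^ 2 = A ^ 2 := by
    rw [hA2, hx_def, hy_def]
    linear_combination (a ^ 2 + b ^ 2) * (Real.sin_sq_add_cos_sq t)
  have hnorm2 : ‖F0 t - F1 s‖ = |A - B| := by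
    rw [hF0, hF1s, EuclideanSpace.norm_eq, Fin.sum_univ_two]
    simp only [PiLp.sub_apply, Matrix.cons_val_zero, Matrix.cons_val_one, Matrix.head_cons,
      Real.norm_eq_abs, sq_abs]
    have key : (x - B * (x / A)) ^ 2 + (y - B * (y / A)) ^ 2 = (A - B) ^ 2 := by
      field_simp
      linear_combination (A - B) ^ 2 * hxy
    rw [key, Real.sqrt_sq_eq_abs]
  -- the quantitative bound
  have hA2' : A ^ 2 = r ^ 2 + 1 + 1 / (2 * π * ρ) := by
    have h2rrp : r * rp = 1 / (4 * π) := by rw [hrp_def]; field_simp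
    rw [hA2, ha_def, hb_def]
    have e1 : (r + rp / ρ) ^ 2 + (r / ρ) ^ 2
        = r ^ 2 + (2 * (r * rp)) / ρ + (rp ^ 2 + r ^ 2) / ρ ^ 2 := by
      field_simp
      ring
    rw [e1, ← hρ2, h2rrp, div_self (by positivity : (ρ:ℝ) ^ 2 ≠ 0)]
    field_simp
    ring
  have hB2' : B ^ 2 = r ^ 2 + 1 + φ / (2 * π) := by
    rw [hB2, hs_def, hr2]
    field_simp
    ring
  have hBA : B ≤ A := by
    have h1 : φ / (2 * π) ≤ 1 / (2 * π * ρ) := by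
      rw [div_le_div_iff₀ (by positivity) (by positivity)]
      have hφρ : φ * ρ ≤ 1 := by
        have := mul_le_mul_of_nonneg_right hφub hρ0.le
        rwa [one_div, inv_mul_cancel₀ hρ0.ne'] at this
      calc φ * (2 * π * ρ) = (φ * ρ) * (2 * π) := by ring
        _ ≤ 1 * (2 * π) := mul_le_mul_of_nonneg_right hφρ (by positivity)
    have h2 : B ^ 2 ≤ A ^ 2 := by rw [hA2', hB2']; linarith
    calc B = Real.sqrt (B ^ 2) := (Real.sqrt_sq hB0.le).symm
      _ ≤ Real.sqrt (A ^ 2) := Real.sqrt_le_sqrt h2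
      _ = A := Real.sqrt_sq hA0.le
  have hAr : r ≤ A := by
    have har : r ≤ a := by
      rw [ha_def]; have : 0 ≤ rp / ρ := by positivity
      linarith
    have h2 : r ^ 2 ≤ A ^ 2 := by rw [hA2]; linarith [sq_nonneg b, pow_le_pow_left₀ hr0.le har 2]
    calc r = Real.sqrt (r ^ 2) := (Real.sqrt_sq hr0.le).symm
      _ ≤ Real.sqrt (A ^ 2) := Real.sqrt_le_sqrt h2
      _ = A := Real.sqrt_sq hA0.le
  have hBr : r ≤ B := by
    have h2 : r ^ 2 ≤ B ^ 2 := by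
      rw [hB2']
      have : 0 ≤ φ / (2 * π) := by positivity
      linarith
    calc r = Real.sqrt (r ^ 2) := (Real.sqrt_sq hr0.le).symm
      _ ≤ Real.sqrt (B ^ 2) := Real.sqrt_le_sqrt h2
      _ = B := Real.sqrt_sq hB0.le
  have h4 : 2 * π * r * (2 * r) = 2 * t := by
    rw [show 2 * π * r * (2 * r) = 4 * π * r ^ 2 by ring, hr2]
    field_simp
    ring
  have h1 : A ^ 2 - B ^ 2 ≤ 1 / (2 * π * r) := by
    rw [hA2', hB2']
    have h5 : 1 / (2 * π * ρ) ≤ 1 / (2 * π * r) := by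
      apply one_div_le_one_div_of_le (by positivity)
      have := mul_le_mul_of_nonneg_left hρr (by positivity : (0:ℝ) ≤ 2 * π)
      linarith
    have h6 : 0 ≤ φ / (2 * π) := by positivity
    linarith
  have h5 : (A - B) * (2 * r) ≤ 1 / (2 * π * r) := by
    calc (A - B) * (2 * r) ≤ (A - B) * (A + B) :=
          mul_le_mul_of_nonneg_left (by linarith) (by linarith)
      _ = A ^ 2 - B ^ 2 := by ring
      _ ≤ 1 / (2 * π * r) := h1
  have h6 : A - B ≤ 1 / (2 * t) := by
    have h8 : A - B ≤ 1 / (2 * π * r) / (2 * r) := by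
      rw [le_div_iff₀ (by positivity)]
      exact h5
    have h9 : 1 / (2 * π * r) / (2 * r) = 1 / (2 * t) := by
      rw [div_div, h4]
    linarith [h8, h9.le, h9.ge]
  -- conclude via the infimum
  have hmem : ‖F0 t - F1 s‖ ∈ {d : ℝ | ∃ s : ℝ, 2 * π ≤ s ∧ d = ‖F0 t - F1 s‖} :=
    ⟨s, hs2π, rfl⟩
  have hbdd : BddBelow {d : ℝ | ∃ s : ℝ, 2 * π ≤ s ∧ d = ‖F0 t - F1 s‖} := by
    refine ⟨0, ?_⟩
    rintro d ⟨u, -, rfl⟩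
    exact norm_nonneg _
  have hE1 : E1 t ≤ ‖F0 t - F1 s‖ := csInf_le hbdd hmem
  have hval : ‖F0 t - F1 s‖ = A - B := by
    rw [hnorm2, abs_of_nonneg (by linarith)]
  -- last comparison
  have hsqt1 : 1 ≤ Real.sqrt t := by
    rw [show (1:ℝ) = Real.sqrt 1 by simp]
    exact Real.sqrt_le_sqrt (by linarith [Real.pi_gt_three])
  have hsqt0 : 0 < Real.sqrt t := by linarith
  have hpow : t ^ (-(1 : ℝ) / 2) = (Real.sqrt t)⁻¹ := by
    rw [show (-(1:ℝ) / 2) = -(1/2 : ℝ) by norm_num, Real.rpow_neg ht0.le,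
      ← Real.sqrt_eq_rpow]
  have hhalf : (1:ℝ)/2 ≤ Real.sqrt (π / 8) := by
    rw [show (1:ℝ)/2 = Real.sqrt ((1:ℝ)/4) by
      rw [show (1:ℝ)/4 = ((1:ℝ)/2)^2 by norm_num, Real.sqrt_sq (by norm_num)]]
    exact Real.sqrt_le_sqrt (by linarith [Real.pi_gt_three])
  have hfin : 1 / (2 * t) ≤ Real.sqrt (π / 8) * t ^ (-(1 : ℝ) / 2) := by
    rw [hpow]
    have hts : t = Real.sqrt t * Real.sqrt t := (Real.mul_self_sqrt ht0.le).symm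
    rw [div_le_iff₀ (by positivity)]
    have hstt : Real.sqrt t ≤ t := by
      calc Real.sqrt t = 1 * Real.sqrt t := (one_mul _).symm
        _ ≤ Real.sqrt t * Real.sqrt t := mul_le_mul_of_nonneg_right hsqt1 hsqt0.le
        _ = t := Real.mul_self_sqrt ht0.le
    calc (1:ℝ) = (1/2) * 2 := by norm_num
      _ ≤ Real.sqrt (π / 8) * (2 * Real.sqrt t * (Real.sqrt t)⁻¹) := by
          rw [mul_assoc, mul_inv_cancel₀ hsqt0.ne', mul_one]
          linarith
      _ = Real.sqrt (π / 8) * (Real.sqrt t)⁻¹ * (2 * Real.sqrt t) := by ring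
      _ ≤ Real.sqrt (π / 8) * (Real.sqrt t)⁻¹ * (2 * t) :=
          mul_le_mul_of_nonneg_left (by linarith) (by positivity)
  calc E1 t ≤ A - B := by rw [← hval]; exact hE1
    _ ≤ 1 / (2 * t) := h6
    _ ≤ Real.sqrt (π / 8) * t ^ (-(1 : ℝ) / 2) := hfin
end
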